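/- If Δ : [0,∞) → ℝ is nondecreasing and bounded with limit Δ∞ = lim_{u→∞} Δ(u), and F_E(t) → 1 as t → ∞, then the cumulative estimand τ_C(t) = (∫₀ᵗ Δ(t−e)dF_E(e))/F_E(t) converges to Δ∞ as t → ∞. -/

import Mathlib

open MeasureTheory Set Filter

/-- If `Δ : [0,∞) → ℝ` is nondecreasing, bounded, and has limit `Δ∞` at infinity, and
the exposure CDF satisfies `F_E(t) → 1` as `t → ∞`, then the cumulative estimand
`τ_C(t) = (∫₀ᵗ Δ(t−e) dF_E(e)) / F_E(t)` converges to `Δ∞` as `t → ∞`.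
Here `μ` is the law of the exposure time `E ≥ 0` and `F_E(s) = μ([0,s])`. -/
theorem cumulative_estimand_tendsto_limit
    (μ : Measure ℝ) [IsProbabilityMeasure μ]
    (hsupp : μ (Set.Iio (0:ℝ)) = 0)
    (Δ : ℝ → ℝ) (hΔmeas : Measurable Δ)
    (hmono : MonotoneOn Δ (Set.Ici 0))
    (hbdd : ∃ M : ℝ, ∀ u : ℝ, 0 ≤ u → |Δ u| ≤ M)
    (Δinf : ℝ) (hΔlim : Tendsto Δ atTop (nhds Δinf))
    (hF : Tendsto (fun t => (μ (Set.Icc (0:ℝ) t)).toReal) atTop (nhds 1)) :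
    Tendsto (fun t => (∫ e in Set.Icc (0:ℝ) t, Δ (t - e) ∂μ) / (μ (Set.Icc 0 t)).toReal)
      atTop (nhds Δinf) := by
  obtain ⟨M, hM⟩ := hbdd
  have hM0 : 0 ≤ M := le_trans (abs_nonneg _) (hM 0 le_rfl)
  set C : ℝ := M + |Δinf| + 1 with hCdef
  have hC0 : 0 < C := by positivity
  have hFle : ∀ s : ℝ, (μ (Set.Icc (0:ℝ) s)).toReal ≤ 1 := by
    intro s
    have h := ENNReal.toReal_mono (measure_ne_top μ univ)
      (measure_mono (subset_univ (Set.Icc (0:ℝ) s)))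
    simpa [measure_univ] using h
  have hint : ∀ t : ℝ, ∀ s : Set ℝ, MeasurableSet s → s ⊆ Set.Icc 0 t →
      IntegrableOn (fun e => Δ (t - e)) s μ := by
    intro t s hs hsub
    refine Measure.integrableOn_of_bounded (M := M) (measure_ne_top μ s)
      ((hΔmeas.comp (measurable_const.sub measurable_id)).aestronglyMeasurable) ?_
    filter_upwards [ae_restrict_mem hs] with e he
    have h0 : 0 ≤ t - e := by have := (hsub he).2; linarith
    simpa [Real.norm_eq_abs] using hM _ h0
  have hnum : Tendsto (fun t => ∫ e in Set.Icc (0:ℝ) t, Δ (t - e) ∂μ) atTop (nhds Δinf) := by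
    rw [Metric.tendsto_atTop]
    intro ε hε
    obtain ⟨A₀, hA⟩ := Metric.tendsto_atTop.mp hΔlim (ε/4) (by positivity)
    set A := max A₀ 0 with hAdef
    have hA0 : (0:ℝ) ≤ A := le_max_right _ _
    have hA' : ∀ u, A ≤ u → |Δ u - Δinf| ≤ ε/4 := fun u hu =>
      le_of_lt (by simpa [Real.dist_eq] using hA u (le_trans (le_max_left _ _) hu))
    obtain ⟨B, hB⟩ := Metric.tendsto_atTop.mp hF (ε/(4*C)) (by positivity)
    refine ⟨A + max B 0 + 1, fun t ht => ?_⟩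
    have htA : max B 0 ≤ t - A := by linarith
    have h0tA : 0 ≤ t - A := le_trans (le_max_right _ _) htA
    have htt : t - A ≤ t := by linarith
    have hBtA : B ≤ t - A := le_trans (le_max_left _ _) htA
    have hBt : B ≤ t := le_trans hBtA htt
    have hdisj : Disjoint (Set.Icc (0:ℝ) (t-A)) (Set.Ioc (t-A) t) := by
      rw [Set.disjoint_left]; rintro e ⟨_, h1⟩ ⟨h2, _⟩; linarith
    have hunion : Set.Icc (0:ℝ) (t-A) ∪ Set.Ioc (t-A) t = Set.Icc 0 t :=
      Set.Icc_union_Ioc_eq_Icc h0tA htt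
    have hi1 : IntegrableOn (fun e => Δ (t - e)) (Set.Icc 0 (t-A)) μ :=
      hint t _ measurableSet_Icc (by rw [← hunion]; exact subset_union_left)
    have hi2 : IntegrableOn (fun e => Δ (t - e)) (Set.Ioc (t-A) t) μ :=
      hint t _ measurableSet_Ioc (by rw [← hunion]; exact subset_union_right)
    have hμsplit : (μ (Set.Icc (0:ℝ) (t-A))).toReal + (μ (Set.Ioc (t-A) t)).toReal
        = (μ (Set.Icc (0:ℝ) t)).toReal := by
      rw [← ENNReal.toReal_add (measure_ne_top _ _) (measure_ne_top _ _),
        ← measure_union hdisj measurableSet_Ioc, hunion]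
    have hIsplit : (∫ e in Set.Icc (0:ℝ) t, Δ (t - e) ∂μ)
        = (∫ e in Set.Icc (0:ℝ) (t-A), Δ (t - e) ∂μ)
          + ∫ e in Set.Ioc (t-A) t, Δ (t - e) ∂μ := by
      rw [← setIntegral_union hdisj measurableSet_Ioc hi1 hi2, hunion]
    -- piece 1 bound
    have b1 : |(∫ e in Set.Icc (0:ℝ) (t-A), Δ (t - e) ∂μ)
        - Δinf * (μ (Set.Icc (0:ℝ) (t-A))).toReal| ≤ ε/4 := by
      have heq : (∫ e in Set.Icc (0:ℝ) (t-A), (Δ (t - e) - Δinf) ∂μ)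
          = (∫ e in Set.Icc (0:ℝ) (t-A), Δ (t - e) ∂μ)
            - Δinf * (μ (Set.Icc (0:ℝ) (t-A))).toReal := by
        rw [integral_sub hi1 (integrableOn_const (measure_ne_top _ _)),
          setIntegral_const, smul_eq_mul, mul_comm]; rfl
      rw [← heq]
      have hb : ‖∫ e in Set.Icc (0:ℝ) (t-A), (Δ (t - e) - Δinf) ∂μ‖
          ≤ (ε/4) * (μ (Set.Icc (0:ℝ) (t-A))).toReal := by
        refine norm_setIntegral_le_of_norm_le_const (measure_lt_top _ _) ?_
        · intro e he
          have : A ≤ t - e := by have := he.2; linarith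
          simpa [Real.norm_eq_abs] using hA' _ this
      calc |∫ e in Set.Icc (0:ℝ) (t-A), (Δ (t - e) - Δinf) ∂μ|
          ≤ (ε/4) * (μ (Set.Icc (0:ℝ) (t-A))).toReal := hb
        _ ≤ (ε/4) * 1 := by
            apply mul_le_mul_of_nonneg_left (hFle _) (by positivity)
        _ = ε/4 := by ring
    -- piece 2 bound
    have hμ2 : (μ (Set.Ioc (t-A) t)).toReal ≤ ε/(4*C) := by
      have h1 : dist ((μ (Set.Icc (0:ℝ) (t-A))).toReal) 1 < ε/(4*C) := hB _ hBtA
      have h2 : 1 - (μ (Set.Icc (0:ℝ) (t-A))).toReal < ε/(4*C) := by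
        rw [Real.dist_eq] at h1; cases abs_lt.mp h1 with
        | intro hl hr => linarith
      have h3 := hFle t
      linarith [hμsplit]
    have b2 : |∫ e in Set.Ioc (t-A) t, Δ (t - e) ∂μ
        - Δinf * (μ (Set.Ioc (t-A) t)).toReal| ≤ ε/4 := by
      have heq : (∫ e in Set.Ioc (t-A) t, (Δ (t - e) - Δinf) ∂μ)
          = (∫ e in Set.Ioc (t-A) t, Δ (t - e) ∂μ)
            - Δinf * (μ (Set.Ioc (t-A) t)).toReal := by
        rw [integral_sub hi2 (integrableOn_const (measure_ne_top _ _)),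
          setIntegral_const, smul_eq_mul, mul_comm]; rfl
      rw [← heq]
      have hb : ‖∫ e in Set.Ioc (t-A) t, (Δ (t - e) - Δinf) ∂μ‖
          ≤ C * (μ (Set.Ioc (t-A) t)).toReal := by
        refine norm_setIntegral_le_of_norm_le_const (measure_lt_top _ _) ?_
        · intro e he
          have h0 : 0 ≤ t - e := by have := he.2; linarith
          have := hM _ h0
          have habs : |Δ (t - e) - Δinf| ≤ M + |Δinf| := by
            calc |Δ (t - e) - Δinf| ≤ |Δ (t - e)| + |Δinf| := abs_sub _ _
              _ ≤ M + |Δinf| := by linarith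
          simp only [Real.norm_eq_abs]
          calc |Δ (t - e) - Δinf| ≤ M + |Δinf| := habs
            _ ≤ C := by simp [hCdef]
      calc |∫ e in Set.Ioc (t-A) t, (Δ (t - e) - Δinf) ∂μ|
          ≤ C * (μ (Set.Ioc (t-A) t)).toReal := hb
        _ ≤ C * (ε/(4*C)) := mul_le_mul_of_nonneg_left hμ2 hC0.le
        _ = ε/4 := by field_simp
    -- piece 3
    have b3 : |Δinf| * |(μ (Set.Icc (0:ℝ) t)).toReal - 1| ≤ ε/4 := by
      have h1 : dist ((μ (Set.Icc (0:ℝ) t)).toReal) 1 < ε/(4*C) := hB _ hBt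
      rw [Real.dist_eq] at h1
      have hCle : |Δinf| ≤ C := by simp [hCdef]; linarith
      calc |Δinf| * |(μ (Set.Icc (0:ℝ) t)).toReal - 1|
          ≤ C * (ε/(4*C)) :=
            mul_le_mul hCle h1.le (abs_nonneg _) hC0.le
        _ = ε/4 := by field_simp
    -- combine
    rw [Real.dist_eq]
    have hdecomp : (∫ e in Set.Icc (0:ℝ) t, Δ (t - e) ∂μ) - Δinf
        = ((∫ e in Set.Icc (0:ℝ) (t-A), Δ (t - e) ∂μ)
            - Δinf * (μ (Set.Icc (0:ℝ) (t-A))).toReal)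
          + ((∫ e in Set.Ioc (t-A) t, Δ (t - e) ∂μ)
            - Δinf * (μ (Set.Ioc (t-A) t)).toReal)
          + Δinf * ((μ (Set.Icc (0:ℝ) t)).toReal - 1) := by
      rw [hIsplit, ← hμsplit]; ring
    calc |(∫ e in Set.Icc (0:ℝ) t, Δ (t - e) ∂μ) - Δinf|
        ≤ |(∫ e in Set.Icc (0:ℝ) (t-A), Δ (t - e) ∂μ)
            - Δinf * (μ (Set.Icc (0:ℝ) (t-A))).toReal|
          + |(∫ e in Set.Ioc (t-A) t, Δ (t - e) ∂μ)
            - Δinf * (μ (Set.Ioc (t-A) t)).toReal|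
          + |Δinf| * |(μ (Set.Icc (0:ℝ) t)).toReal - 1| := by
          rw [hdecomp]
          calc |_ + _ + _| ≤ |_ + _| + |Δinf * ((μ (Set.Icc (0:ℝ) t)).toReal - 1)| :=
              abs_add_le _ _
            _ ≤ _ := by rw [abs_mul]; exact add_le_add_left (abs_add_le _ _) _
      _ ≤ ε/4 + ε/4 + ε/4 := by gcongr
      _ < ε := by linarith
  have := hnum.div hF one_ne_zero
  rw [div_one] at this; exact this
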